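/- Assume μ₀ ∈ 𝒦 and μ_θ = (θ ⊙ x)♯μ₀ for θ ∈ ℝ₊ᵈ. For any slicing schedule with directions parallel to the coordinate axes, the no-collision map between μ_θ and μ_{θ'} is the coordinatewise dilation t(x)_j = (θ'_j/θ_j) x_j μ_θ-a.e.; it coincides with the optimal transport map, and W_{𝒮,2}²(μ_θ, μ_{θ'}) = Σ_j c_j² (θ_j − θ'_j)² with c_j² = ∫ x_j² dμ₀. -/

import Mathlib

open MeasureTheory Real
open scoped ENNReal NNReal RealInnerProductSpace

variable {d : ℕ}

/-- A slicing schedule, assigning to each partition cell (indexed by the binary word of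
splitting decisions, most recent decision first) a unit direction along which it is
bisected. -/
structure Slicing (d : ℕ) where
  dir : List Bool → EuclideanSpace ℝ (Fin d)
  unit : ∀ b, ‖dir b‖ = 1

/-- The partition cells determined by a slicing schedule `S` and heights `h`:
`Ω_[] = ℝᵈ` and the cell `Ω_b` is bisected by the hyperplane `{x · s_b = h_b}`. -/
noncomputable def cell (S : Slicing d) (h : List Bool → ℝ) :
    List Bool → Set (EuclideanSpace ℝ (Fin d))
  | [] => Set.univ
  | (i :: b) => cell S h b ∩ {x | if i then h b < ⟪S.dir b, x⟫ else ⟪S.dir b, x⟫ ≤ h b}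

/-- `h` realizes median (equal-mass) bisections of every cell for `μ`. -/
def IsMedianHeights (S : Slicing d) (μ : Measure (EuclideanSpace ℝ (Fin d)))
    (h : List Bool → ℝ) : Prop :=
  ∀ b, μ (cell S h (false :: b)) = μ (cell S h (true :: b))

/-- The ternary label `Σ_α i_α/3^α` of a cell. -/
noncomputable def label : List Bool → ℝ
  | [] => 0
  | (i :: b) => label b + (if i then 1 else 0) / 3 ^ (b.length + 1)

open Classical in
/-- The address (index of the nested cell) of a point at depth `k`. -/
noncomputable def addr (S : Slicing d) (h : List Bool → ℝ)
    (x : EuclideanSpace ℝ (Fin d)) : ℕ → List Bool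
  | 0 => []
  | (k + 1) =>
    (if h (addr S h x k) < ⟪S.dir (addr S h x k), x⟫ then true else false) :: addr S h x k

/-- The limiting labeling function `ℓ^μ`. -/
noncomputable def ell (S : Slicing d) (h : List Bool → ℝ)
    (x : EuclideanSpace ℝ (Fin d)) : ℝ :=
  ⨆ k, label (addr S h x k)

/-- `t` is a no-collision map from `(μ, hμ)` to `(ν, hν)`: it pushes `μ` forward to `ν`
and maps each partition cell of `μ` into the corresponding cell of `ν` (μ-a.e.). -/
def IsNoCollisionMap (S : Slicing d) (hμ hν : List Bool → ℝ)
    (μ ν : Measure (EuclideanSpace ℝ (Fin d)))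
    (t : EuclideanSpace ℝ (Fin d) → EuclideanSpace ℝ (Fin d)) : Prop :=
  Measurable t ∧ μ.map t = ν ∧ ∀ b, ∀ᵐ x ∂μ, x ∈ cell S hμ b → t x ∈ cell S hν b

/-- The class `𝒦`: compactly supported absolutely continuous probability measures whose
density is bounded above and below on the support, with null boundary of support. -/
def MemK (μ : Measure (EuclideanSpace ℝ (Fin d))) : Prop :=
  IsProbabilityMeasure μ ∧ μ ≪ volume ∧
  ∃ K : Set (EuclideanSpace ℝ (Fin d)), IsCompact K ∧ μ Kᶜ = 0 ∧ μ (frontier K) = 0 ∧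
    ∃ c C : ℝ, 0 < c ∧
      ∀ᵐ x ∂(volume.restrict K),
        ENNReal.ofReal c ≤ μ.rnDeriv volume x ∧ μ.rnDeriv volume x ≤ ENNReal.ofReal C

/-- The finite initial branches of an infinite splitting sequence. -/
def branch (σ : ℕ → Bool) : ℕ → List Bool
  | 0 => []
  | (k + 1) => σ k :: branch σ k

/-- Coordinatewise (Hadamard) dilation `x ↦ θ ⊙ x`. -/
noncomputable def hadamard (θ : Fin d → ℝ) (x : EuclideanSpace ℝ (Fin d)) :
    EuclideanSpace ℝ (Fin d) :=
  WithLp.toLp 2 (fun i => θ i * x i)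

/-- `T` is an optimal transport map (for quadratic cost) pushing `μ` forward to `ν`. -/
def IsOptimalMap (μ ν : Measure (EuclideanSpace ℝ (Fin d)))
    (T : EuclideanSpace ℝ (Fin d) → EuclideanSpace ℝ (Fin d)) : Prop :=
  Measurable T ∧ μ.map T = ν ∧
  ∀ S : EuclideanSpace ℝ (Fin d) → EuclideanSpace ℝ (Fin d),
    Measurable S → μ.map S = ν →
    ∫ x, ‖T x - x‖ ^ 2 ∂μ ≤ ∫ x, ‖S x - x‖ ^ 2 ∂μ

open Filter Topology

/-!
Composing a no-collision map `t` from `μ_θ` to `μ_θ'` with the inverse of the dilation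
`D = hadamard (θ' / θ)` gives a measure-preserving self-map `s` of `μ_θ` which keeps almost every
point in each of its cells: `D` maps the median cells of `μ_θ` onto median cells of `μ_θ'`, and
median heights of a measure determine its cells up to null sets. Such an `s` is the identity.
Indeed, fix an axis `i` and a threshold `q`, and let `p_k(x)` be the conditional probability of
`{q < y i}` given the depth-`k` cell of `x`. By Lévy's upward theorem `p_k(x)` converges to a
limit which lies in `(0, 1)` if `x` and `s x` are on different sides of `q`. But each time the
common cell of `x` and `s x` is split along axis `i`, which happens infinitely often, the sibling
cell lies on one side of `q`, so `p_{k+1} = 2 p_k` or `p_{k+1} = 2 p_k - 1`, forcing the limit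
into `{0, 1}`.

The dilation `x ↦ r ⊙ x` is optimal because
`‖y - x‖² ≥ ∑ (1 - r_j) x_j² + ∑ (1 - 1/r_j) y_j²`, with equality on its graph: a pair of
Kantorovich potentials.
-/

section Cells

variable {S : Slicing d} {h : List Bool → ℝ}

theorem cell_cons_false (S : Slicing d) (h : List Bool → ℝ) (b : List Bool) :
    cell S h (false :: b) = cell S h b ∩ {x | ⟪S.dir b, x⟫ ≤ h b} := rfl

theorem cell_cons_true (S : Slicing d) (h : List Bool → ℝ) (b : List Bool) :
    cell S h (true :: b) = cell S h b \ {x | ⟪S.dir b, x⟫ ≤ h b} := by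
  ext x
  simp [cell]

theorem cell_cons_subset (i : Bool) (b : List Bool) : cell S h (i :: b) ⊆ cell S h b :=
  Set.inter_subset_left

theorem measurableSet_cell (S : Slicing d) (h : List Bool → ℝ) :
    ∀ b, MeasurableSet (cell S h b)
  | [] => MeasurableSet.univ
  | (i :: b) => by
    have hH : MeasurableSet {x : EuclideanSpace ℝ (Fin d) | ⟪S.dir b, x⟫ ≤ h b} :=
      measurableSet_le (measurable_const.inner measurable_id) measurable_const
    cases i
    · exact (measurableSet_cell S h b).inter hH
    · rw [cell_cons_true]
      exact (measurableSet_cell S h b).diff hH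

theorem cell_cons_union_cell_cons_not (i : Bool) (b : List Bool) :
    cell S h (i :: b) ∪ cell S h ((!i) :: b) = cell S h b := by
  cases i <;> simp [cell_cons_false, cell_cons_true, Set.union_comm]

theorem disjoint_cell_cons_cell_cons_not (i : Bool) (b : List Bool) :
    Disjoint (cell S h (i :: b)) (cell S h ((!i) :: b)) := by
  cases i
  · simpa [cell_cons_false, cell_cons_true] using
      Set.disjoint_sdiff_right.mono_left Set.inter_subset_right
  · simpa [cell_cons_false, cell_cons_true] using
      (Set.disjoint_sdiff_right.mono_left Set.inter_subset_right).symm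

theorem addr_length (S : Slicing d) (h : List Bool → ℝ) (x : EuclideanSpace ℝ (Fin d)) :
    ∀ k, (addr S h x k).length = k
  | 0 => rfl
  | (k + 1) => by simp [addr, addr_length S h x k]

theorem addr_eq_iff_mem_cell {x : EuclideanSpace ℝ (Fin d)} {b : List Bool} :
    addr S h x b.length = b ↔ x ∈ cell S h b := by
  induction b with
  | nil => simp [addr, cell]
  | cons i b ih =>
    rw [List.length_cons, addr, List.cons.injEq]
    by_cases hb : x ∈ cell S h b
    · rw [ih.2 hb]
      cases i <;> by_cases hx : h b < ⟪S.dir b, x⟫ <;> simp [cell, hb, hx, le_of_not_gt]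
    · exact iff_of_false (fun hx => hb (ih.1 hx.2)) fun hx => hb (cell_cons_subset i b hx)

end Cells

theorem inter_ae_eq_inter_of_measure_eq {α : Type*} [MeasurableSpace α] {μ : Measure α}
    [IsFiniteMeasure μ] {C₁ C₂ H₁ H₂ : Set α} (hC : C₁ =ᵐ[μ] C₂) (hH : H₁ ⊆ H₂)
    (hC₂ : MeasurableSet C₂) (hH₁ : MeasurableSet H₁) (hμ : μ (C₁ ∩ H₁) = μ (C₂ ∩ H₂)) :
    (C₁ ∩ H₁ : Set α) =ᵐ[μ] (C₂ ∩ H₂ : Set α) := by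
  have hC₁ : (C₁ ∩ H₁ : Set α) =ᵐ[μ] (C₂ ∩ H₁ : Set α) := hC.inter (ae_eq_refl H₁)
  refine hC₁.trans (ae_eq_of_subset_of_measure_ge (Set.inter_subset_inter_right _ hH) ?_
    (hC₂.inter hH₁).nullMeasurableSet (measure_ne_top μ _))
  rw [← hμ, measure_congr hC₁]

section Median

variable {S : Slicing d} {h : List Bool → ℝ} {μ : Measure (EuclideanSpace ℝ (Fin d))}
  [IsProbabilityMeasure μ]

theorem IsMedianHeights.measure_cell (hm : IsMedianHeights S μ h) (b : List Bool) :
    μ (cell S h b) = 2⁻¹ ^ b.length := by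
  induction b with
  | nil => simp [cell]
  | cons i b ih =>
    have hsum : μ (cell S h (i :: b)) + μ (cell S h ((!i) :: b)) = 2⁻¹ ^ b.length := by
      rw [← ih, ← measure_union (disjoint_cell_cons_cell_cons_not i b) (measurableSet_cell S h _),
        cell_cons_union_cell_cons_not]
    have hhalf : μ (cell S h ((!i) :: b)) = μ (cell S h (i :: b)) := by
      cases i
      · exact (hm b).symm
      · exact hm b
    rw [hhalf, ← two_mul] at hsum
    rw [List.length_cons, pow_succ, ← hsum, mul_comm, ← mul_assoc,
      ENNReal.inv_mul_cancel two_ne_zero ENNReal.ofNat_ne_top, one_mul]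

theorem IsMedianHeights.measureReal_cell (hm : IsMedianHeights S μ h) (b : List Bool) :
    μ.real (cell S h b) = 2⁻¹ ^ b.length := by
  simp [measureReal_def, hm.measure_cell]

theorem IsMedianHeights.cell_ae_eq {h₁ h₂ : List Bool → ℝ} (hm₁ : IsMedianHeights S μ h₁)
    (hm₂ : IsMedianHeights S μ h₂) (b : List Bool) : cell S h₁ b =ᵐ[μ] cell S h₂ b := by
  induction b with
  | nil => rfl
  | cons i b ih =>
    set H : ℝ → Set (EuclideanSpace ℝ (Fin d)) := fun t => {x | ⟪S.dir b, x⟫ ≤ t}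
    have hH : ∀ t, MeasurableSet (H t) := fun t =>
      measurableSet_le (measurable_const.inner measurable_id) measurable_const
    have hmono : Monotone H := fun t t' htt x hx => le_trans hx htt
    have hlow : cell S h₁ (false :: b) =ᵐ[μ] cell S h₂ (false :: b) := by
      have hμ : μ (cell S h₁ (false :: b)) = μ (cell S h₂ (false :: b)) := by
        rw [hm₁.measure_cell, hm₂.measure_cell, List.length_cons]
      rcases le_total (h₁ b) (h₂ b) with hle | hle
      · exact inter_ae_eq_inter_of_measure_eq ih (hmono hle) (measurableSet_cell S h₂ b)
          (hH _) hμ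
      · exact (inter_ae_eq_inter_of_measure_eq ih.symm (hmono hle) (measurableSet_cell S h₁ b)
          (hH _) hμ.symm).symm
    cases i
    · exact hlow
    · rw [cell_cons_true, cell_cons_true, ← Set.sdiff_self_inter,
        ← Set.sdiff_self_inter (s := cell S h₂ b)]
      exact ih.diff hlow

end Median

section Filtration

variable {S : Slicing d} {h : List Bool → ℝ}

variable (S h) in
theorem mem_cell_addr (x : EuclideanSpace ℝ (Fin d)) (k : ℕ) : x ∈ cell S h (addr S h x k) :=
  addr_eq_iff_mem_cell.1 (by rw [addr_length])

def Slicing.SplitsEachAxisInfinitelyOften (S : Slicing d) : Prop :=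
  ∀ (σ : ℕ → Bool) (i : Fin d),
    {k : ℕ | ∃ c : ℝ, S.dir (branch σ k) = c • EuclideanSpace.single i (1 : ℝ)}.Infinite

theorem addr_eq_branch (x : EuclideanSpace ℝ (Fin d)) (k : ℕ) :
    addr S h x k = branch (fun n => (addr S h x (n + 1)).headI) k := by
  induction k with
  | zero => rfl
  | succ k ih => rw [branch, ← ih]; rfl

variable (S h) in
noncomputable abbrev cellSigma (k : ℕ) : MeasurableSpace (EuclideanSpace ℝ (Fin d)) :=
  MeasurableSpace.comap (fun x => addr S h x k) ⊤

theorem preimage_addr_singleton (b : List Bool) :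
    (fun x => addr S h x b.length) ⁻¹' {b} = cell S h b :=
  Set.ext fun _ => addr_eq_iff_mem_cell

theorem measurableSet_cellSigma_cell (b : List Bool) :
    MeasurableSet[cellSigma S h b.length] (cell S h b) :=
  ⟨{b}, trivial, preimage_addr_singleton b⟩

variable (S h) in
theorem cellSigma_le (k : ℕ) :
    cellSigma S h k ≤ (inferInstance : MeasurableSpace (EuclideanSpace ℝ (Fin d))) := by
  rintro _ ⟨B, -, rfl⟩
  rw [← Set.biUnion_preimage_singleton]
  refine MeasurableSet.biUnion (Set.to_countable B) fun b _ => ?_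
  by_cases hb : b.length = k
  · subst hb
    rw [preimage_addr_singleton]
    exact measurableSet_cell S h b
  · convert MeasurableSet.empty
    exact Set.eq_empty_of_forall_notMem fun x hx => hb (hx ▸ addr_length S h x k)

variable (S h) in
theorem cellSigma_mono : Monotone (cellSigma S h) := by
  refine monotone_nat_of_le_succ fun k => ?_
  have hk : (fun x => addr S h x k) = List.tail ∘ fun x => addr S h x (k + 1) := rfl
  rw [cellSigma, hk, ← MeasurableSpace.comap_comp]
  exact MeasurableSpace.comap_mono le_top

variable (S h) in
noncomputable def cellFiltration :
    Filtration ℕ (inferInstance : MeasurableSpace (EuclideanSpace ℝ (Fin d))) :=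
  ⟨cellSigma S h, cellSigma_mono S h, cellSigma_le S h⟩

theorem eq_of_addr_eq {k : ℕ} {g : EuclideanSpace ℝ (Fin d) → ℝ}
    (hg : Measurable[cellSigma S h k] g) {x y : EuclideanSpace ℝ (Fin d)}
    (hxy : addr S h x k = addr S h y k) : g x = g y := by
  obtain ⟨B, -, hB⟩ := hg (measurableSet_singleton (g y))
  have hy : y ∈ (fun x => addr S h x k) ⁻¹' B := by rw [hB]; rfl
  have hx : x ∈ (fun x => addr S h x k) ⁻¹' B := by simpa only [Set.mem_preimage, hxy] using hy
  rw [hB] at hx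
  exact hx

theorem condExp_indicator_mul_measureReal_cell {μ : Measure (EuclideanSpace ℝ (Fin d))}
    [IsFiniteMeasure μ] {A : Set (EuclideanSpace ℝ (Fin d))} (hA : MeasurableSet A)
    {b : List Bool} {x : EuclideanSpace ℝ (Fin d)} (hx : x ∈ cell S h b) :
    μ[A.indicator (fun _ => (1 : ℝ)) | cellSigma S h b.length] x * μ.real (cell S h b) =
      μ.real (cell S h b ∩ A) := by
  have hconst : Set.EqOn (μ[A.indicator (fun _ => (1 : ℝ)) | cellSigma S h b.length])
      (fun _ => μ[A.indicator (fun _ => (1 : ℝ)) | cellSigma S h b.length] x) (cell S h b) :=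
    fun y hy => eq_of_addr_eq stronglyMeasurable_condExp.measurable
      ((addr_eq_iff_mem_cell.2 hy).trans (addr_eq_iff_mem_cell.2 hx).symm)
  have hint := setIntegral_condExp (cellSigma_le S h b.length)
    ((integrable_const (μ := μ) (1 : ℝ)).indicator hA) (measurableSet_cellSigma_cell b)
  rw [setIntegral_congr_fun (measurableSet_cell S h b) hconst, setIntegral_const,
    setIntegral_indicator hA, setIntegral_const] at hint
  simpa [mul_comm] using hint

end Filtration

theorem ae_pos_condExp_of_pos {α : Type*} {m m₀ : MeasurableSpace α} {μ : Measure α}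
    [IsFiniteMeasure μ] (hm : m ≤ m₀) {f : α → ℝ} (hf : Integrable f μ) (hf₀ : 0 ≤ᵐ[μ] f) :
    ∀ᵐ x ∂μ, 0 < f x → 0 < μ[f | m] x := by
  set Z := {x | μ[f | m] x ≤ 0}
  have hZ : MeasurableSet[m] Z :=
    (stronglyMeasurable_condExp (m := m) (μ := μ) (f := f)).measurable measurableSet_Iic
  have hint : ∫ x in Z, f x ∂μ = 0 := by
    refine le_antisymm ?_ (setIntegral_nonneg_of_ae_restrict (ae_restrict_of_ae hf₀))
    rw [← setIntegral_condExp hm hf hZ]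
    exact setIntegral_nonpos (hm _ hZ) fun x hx => hx
  have hzero := (setIntegral_eq_zero_iff_of_nonneg_ae (ae_restrict_of_ae hf₀)
    hf.integrableOn).1 hint
  rw [Filter.EventuallyEq, ae_restrict_iff' (hm _ hZ)] at hzero
  filter_upwards [hzero] with x hx hfx
  exact lt_of_not_ge fun hle => hfx.ne' (hx hle)

theorem eq_zero_or_eq_one_of_frequently_double {a : ℕ → ℝ} {L : ℝ}
    (ha : Tendsto a atTop (𝓝 L))
    (hfreq : ∃ᶠ k in atTop, a (k + 1) = 2 * a k ∨ a (k + 1) = 2 * a k - 1) : L = 0 ∨ L = 1 := by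
  have hsucc := ha.comp (tendsto_add_atTop_nat 1)
  have hlim : Tendsto (fun k => (a (k + 1) - 2 * a k) * (a (k + 1) - 2 * a k + 1)) atTop
      (𝓝 ((L - 2 * L) * (L - 2 * L + 1))) :=
    (hsucc.sub (ha.const_mul 2)).mul ((hsucc.sub (ha.const_mul 2)).add_const 1)
  have hzero := tendsto_nhds_unique_of_frequently_eq hlim
    (tendsto_const_nhds : Tendsto (fun _ : ℕ => (0 : ℝ)) atTop (𝓝 0))
    (hfreq.mono fun k hk => by rcases hk with hk | hk <;> rw [hk] <;> ring)
  rcases mul_eq_zero.1 hzero with h0 | h1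
  · left; linarith
  · right; linarith

section Martingale

variable {S : Slicing d} {h : List Bool → ℝ} {μ : Measure (EuclideanSpace ℝ (Fin d))}

theorem ae_exists_tendsto_condExp_indicator_cellSigma [IsFiniteMeasure μ]
    {A : Set (EuclideanSpace ℝ (Fin d))} (hA : MeasurableSet A) :
    ∀ᵐ x ∂μ, ∃ L : ℝ,
      Tendsto (fun k => μ[A.indicator (fun _ => (1 : ℝ)) | cellSigma S h k] x) atTop (𝓝 L) ∧
        (x ∈ A → 0 < L) ∧ (x ∉ A → L < 1) := by
  have hle : ⨆ k, cellSigma S h k ≤ (inferInstance : MeasurableSpace _) :=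
    iSup_le (cellSigma_le S h)
  have hint : Integrable (A.indicator fun _ => (1 : ℝ)) μ := (integrable_const _).indicator hA
  have hint' : Integrable (Aᶜ.indicator fun _ => (1 : ℝ)) μ :=
    (integrable_const _).indicator hA.compl
  have hlevy := tendsto_ae_condExp (ℱ := cellFiltration S h) (μ := μ)
    (A.indicator fun _ => (1 : ℝ))
  have hpos := ae_pos_condExp_of_pos hle hint
    (ae_of_all _ fun _ => Set.indicator_nonneg (fun _ _ => zero_le_one) _)
  have hpos' := ae_pos_condExp_of_pos hle hint'
    (ae_of_all _ fun _ => Set.indicator_nonneg (fun _ _ => zero_le_one) _)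
  have hcompl : μ[Aᶜ.indicator (fun _ => (1 : ℝ)) | ⨆ k, cellSigma S h k] =ᵐ[μ]
      fun x => 1 - μ[A.indicator (fun _ => (1 : ℝ)) | ⨆ k, cellSigma S h k] x := by
    rw [Set.indicator_compl]
    filter_upwards [condExp_sub (integrable_const (1 : ℝ)) hint (⨆ k, cellSigma S h k)]
      with x hx
    rw [hx, Pi.sub_apply, condExp_const hle]
  filter_upwards [hlevy, hpos, hpos', hcompl] with x hx hxA hxA' hx'
  refine ⟨μ[A.indicator (fun _ => (1 : ℝ)) | ⨆ k, cellSigma S h k] x, hx,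
    fun hmem => hxA (by simp [hmem]), fun hmem => ?_⟩
  have := hxA' (by simp [hmem])
  rw [hx'] at this
  linarith

end Martingale

theorem inner_smul_single_left (c : ℝ) (i : Fin d) (x : EuclideanSpace ℝ (Fin d)) :
    ⟪c • EuclideanSpace.single i (1 : ℝ), x⟫ = c * x i := by
  simp [real_inner_smul_left, EuclideanSpace.inner_single_left]

theorem measurableSet_lt_apply (i : Fin d) (q : ℝ) :
    MeasurableSet {y : EuclideanSpace ℝ (Fin d) | q < y i} :=
  measurableSet_lt measurable_const (by fun_prop)

section Doubling

variable {S : Slicing d} {h : List Bool → ℝ} {b : List Bool} {j : Bool} {c q : ℝ} {i : Fin d}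
  {x z : EuclideanSpace ℝ (Fin d)}

theorem cell_cons_not_subset_or_disjoint (hdir : S.dir b = c • EuclideanSpace.single i 1)
    (hx : x ∈ cell S h (j :: b)) (hz : z ∈ cell S h (j :: b)) (hxq : q < x i) (hzq : z i ≤ q) :
    cell S h ((!j) :: b) ⊆ {y | q < y i} ∨ Disjoint (cell S h ((!j) :: b)) {y | q < y i} := by
  -- the two children lie on opposite sides of the hyperplane `{y | c * y i = h b}`
  obtain ⟨σ, hσ⟩ : ∃ σ : ℝ, ∀ y ∈ cell S h ((!j) :: b), ∀ w ∈ cell S h (j :: b),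
      0 < σ * (y i - w i) := by
    cases j
    · refine ⟨c, fun y hy w hw => ?_⟩
      simp only [Bool.not_false, cell_cons_true, cell_cons_false, Set.mem_sdiff, Set.mem_inter_iff,
        Set.mem_ofPred_eq, hdir, inner_smul_single_left] at hy hw
      linarith [hy.2, hw.2]
    · refine ⟨-c, fun y hy w hw => ?_⟩
      simp only [Bool.not_true, cell_cons_true, cell_cons_false, Set.mem_sdiff, Set.mem_inter_iff,
        Set.mem_ofPred_eq, hdir, inner_smul_single_left] at hy hw
      linarith [hy.2, hw.2]
  rcases le_or_gt σ 0 with hσ0 | hσ0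
  · refine Or.inr (Set.disjoint_left.2 fun y hy hyq => ?_)
    have := hσ y hy z hz
    nlinarith [show q < y i from hyq]
  · refine Or.inl fun y hy => ?_
    have := hσ y hy x hx
    show q < y i
    nlinarith

theorem measureReal_cell_cons_inter_of_dir_eq {μ : Measure (EuclideanSpace ℝ (Fin d))}
    [IsFiniteMeasure μ] (hdir : S.dir b = c • EuclideanSpace.single i 1)
    (hx : x ∈ cell S h (j :: b)) (hz : z ∈ cell S h (j :: b)) (hxq : q < x i) (hzq : z i ≤ q) :
    μ.real (cell S h (j :: b) ∩ {y | q < y i}) = μ.real (cell S h b ∩ {y | q < y i}) ∨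
      μ.real (cell S h (j :: b) ∩ {y | q < y i}) + μ.real (cell S h ((!j) :: b)) =
        μ.real (cell S h b ∩ {y | q < y i}) := by
  have hsplit : μ.real (cell S h b ∩ {y | q < y i}) = μ.real (cell S h (j :: b) ∩ {y | q < y i}) +
      μ.real (cell S h ((!j) :: b) ∩ {y | q < y i}) := by
    rw [← cell_cons_union_cell_cons_not j b, Set.union_inter_distrib_right,
      measureReal_union ((disjoint_cell_cons_cell_cons_not j b).mono Set.inter_subset_left
        Set.inter_subset_left) ((measurableSet_cell S h _).inter (measurableSet_lt_apply i q))]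
  rcases cell_cons_not_subset_or_disjoint hdir hx hz hxq hzq with hsub | hdisj
  · right
    rw [hsplit, Set.inter_eq_left.2 hsub]
  · left
    rw [hsplit, hdisj.inter_eq, measureReal_empty, add_zero]

end Doubling

section Uniqueness

variable {S : Slicing d} {h : List Bool → ℝ} {μ : Measure (EuclideanSpace ℝ (Fin d))}
  [IsProbabilityMeasure μ]

theorem frequently_double_of_mul_eq_measureReal
    (hrec : S.SplitsEachAxisInfinitelyOften)
    (hm : IsMedianHeights S μ h) {i : Fin d} {q : ℝ} {x z : EuclideanSpace ℝ (Fin d)}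
    (hzx : ∀ k, addr S h z k = addr S h x k) (hxq : q < x i) (hzq : z i ≤ q) {a : ℕ → ℝ}
    (ha : ∀ k, a k * 2⁻¹ ^ k = μ.real (cell S h (addr S h x k) ∩ {y | q < y i})) :
    ∃ᶠ k in atTop, a (k + 1) = 2 * a k ∨ a (k + 1) = 2 * a k - 1 := by
  have hfreq : ∃ᶠ k in atTop, ∃ c : ℝ, S.dir (addr S h x k) = c • EuclideanSpace.single i 1 := by
    rw [Nat.frequently_atTop_iff_infinite]
    simpa only [← addr_eq_branch] using hrec (fun n => (addr S h x (n + 1)).headI) i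
  refine hfreq.mono fun k ⟨c, hc⟩ => ?_
  obtain ⟨j, hj⟩ : ∃ j, addr S h x (k + 1) = j :: addr S h x k := ⟨_, rfl⟩
  have hx : x ∈ cell S h (j :: addr S h x k) := hj ▸ mem_cell_addr S h x (k + 1)
  have hz : z ∈ cell S h (j :: addr S h x k) := hj ▸ hzx (k + 1) ▸ mem_cell_addr S h z (k + 1)
  have hsib : μ.real (cell S h ((!j) :: addr S h x k)) = 2⁻¹ ^ k * 2⁻¹ := by
    rw [hm.measureReal_cell, List.length_cons, addr_length, pow_succ]
  have hk := ha k
  have hk1 := ha (k + 1)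
  rw [hj, pow_succ] at hk1
  have hu : (2⁻¹ : ℝ) ^ k ≠ 0 := by positivity
  rcases measureReal_cell_cons_inter_of_dir_eq (μ := μ) hc hx hz hxq hzq with h1 | h1
  · exact Or.inl (mul_right_cancel₀ hu (by linear_combination 2 * hk1 - 2 * hk + 2 * h1))
  · exact Or.inr (mul_right_cancel₀ hu
      (by linear_combination 2 * hk1 - 2 * hk + 2 * h1 - 2 * hsib))

theorem ae_lt_apply_iff_of_mapsTo_cell
    (hrec : S.SplitsEachAxisInfinitelyOften)
    (hm : IsMedianHeights S μ h) {s : EuclideanSpace ℝ (Fin d) → EuclideanSpace ℝ (Fin d)}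
    (hs : MeasurePreserving s μ μ) (hcell : ∀ᵐ x ∂μ, ∀ b, x ∈ cell S h b → s x ∈ cell S h b)
    (i : Fin d) (q : ℝ) : ∀ᵐ x ∂μ, (q < s x i ↔ q < x i) := by
  set A : Set (EuclideanSpace ℝ (Fin d)) := {y | q < y i}
  set a : ℕ → EuclideanSpace ℝ (Fin d) → ℝ :=
    fun k => μ[A.indicator (fun _ => (1 : ℝ)) | cellSigma S h k]
  have ha : ∀ x k, a k x * 2⁻¹ ^ k = μ.real (cell S h (addr S h x k) ∩ A) := fun x k => by
    have := condExp_indicator_mul_measureReal_cell (μ := μ) (measurableSet_lt_apply i q)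
      (mem_cell_addr S h x k)
    rwa [hm.measureReal_cell, addr_length] at this
  have hgood := ae_exists_tendsto_condExp_indicator_cellSigma (S := S) (h := h) (μ := μ)
    (measurableSet_lt_apply i q)
  filter_upwards [hgood, hs.quasiMeasurePreserving.ae hgood, hcell]
    with x ⟨L, hL, hLpos, hLlt⟩ ⟨L', hL', hL'pos, hL'lt⟩ hxc
  have haddr : ∀ k, addr S h (s x) k = addr S h x k := fun k => by
    have := addr_eq_iff_mem_cell.2 (hxc _ (mem_cell_addr S h x k))
    rwa [addr_length] at this
  have ha_eq : ∀ k, a k (s x) = a k x := fun k =>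
    eq_of_addr_eq stronglyMeasurable_condExp.measurable (haddr k)
  obtain rfl : L' = L := tendsto_nhds_unique (hL'.congr ha_eq) hL
  have hsep : ∀ {u v : EuclideanSpace ℝ (Fin d)}, (∀ k, addr S h v k = addr S h u k) →
      q < u i → v i ≤ q → Tendsto (fun k => a k u) atTop (𝓝 L') → 0 < L' → L' < 1 → False :=
    fun hvu hu hv hLu h0 h1 => by
      rcases eq_zero_or_eq_one_of_frequently_double hLu
        (frequently_double_of_mul_eq_measureReal hrec hm hvu hu hv (ha _)) with h | h <;> linarith
  constructor
  · intro hsx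
    by_contra hx
    exact hsep (fun k => (haddr k).symm) hsx (not_lt.1 hx) hL' (hL'pos hsx) (hLlt hx)
  · intro hx
    by_contra hsx
    exact hsep haddr hx (not_lt.1 hsx) hL (hLpos hx) (hL'lt hsx)

theorem ae_eq_id_of_mapsTo_cell
    (hrec : S.SplitsEachAxisInfinitelyOften)
    (hm : IsMedianHeights S μ h) {s : EuclideanSpace ℝ (Fin d) → EuclideanSpace ℝ (Fin d)}
    (hs : MeasurePreserving s μ μ) (hcell : ∀ b, ∀ᵐ x ∂μ, x ∈ cell S h b → s x ∈ cell S h b) :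
    s =ᵐ[μ] id := by
  have hall : ∀ᵐ x ∂μ, ∀ i (q : ℚ), ((q : ℝ) < s x i ↔ (q : ℝ) < x i) :=
    ae_all_iff.2 fun i => ae_all_iff.2 fun q =>
      ae_lt_apply_iff_of_mapsTo_cell hrec hm hs (ae_all_iff.2 hcell) i q
  filter_upwards [hall] with x hx
  ext i
  exact eq_of_forall_rat_lt_iff_lt (hx i)

end Uniqueness

section Dilation

variable {S : Slicing d} {μ : Measure (EuclideanSpace ℝ (Fin d))}

theorem ae_eq_of_isNoCollisionMap [IsProbabilityMeasure μ]
    (hrec : S.SplitsEachAxisInfinitelyOften)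
    {hμ hν : List Bool → ℝ} {ν : Measure (EuclideanSpace ℝ (Fin d))}
    (hm : IsMedianHeights S μ hμ) (D : EuclideanSpace ℝ (Fin d) ≃ᵐ EuclideanSpace ℝ (Fin d))
    (hD : μ.map D = ν) (hDcell : ∀ b, D ⁻¹' cell S hν b =ᵐ[μ] cell S hμ b)
    {t : EuclideanSpace ℝ (Fin d) → EuclideanSpace ℝ (Fin d)}
    (ht : IsNoCollisionMap S hμ hν μ ν t) : t =ᵐ[μ] D := by
  obtain ⟨htm, htν, htcell⟩ := ht
  have hs : MeasurePreserving (D.symm ∘ t) μ μ :=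
    ⟨D.symm.measurable.comp htm, by
      rw [← Measure.map_map D.symm.measurable htm, htν, ← hD, MeasurableEquiv.map_symm_map]⟩
  have hscell : ∀ b, ∀ᵐ x ∂μ, x ∈ cell S hμ b → D.symm (t x) ∈ cell S hμ b := fun b => by
    filter_upwards [htcell b, hs.quasiMeasurePreserving.ae (hDcell b)] with x hx hsx hxb
    have : D.symm (t x) ∈ D ⁻¹' cell S hν b := by
      rw [Set.mem_preimage, D.apply_symm_apply]
      exact hx hxb
    exact Eq.mp hsx this
  filter_upwards [ae_eq_id_of_mapsTo_cell hrec hm hs hscell] with x hx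
  simpa using congrArg D hx

theorem hadamard_apply (θ : Fin d → ℝ) (x : EuclideanSpace ℝ (Fin d)) (i : Fin d) :
    hadamard θ x i = θ i * x i := rfl

@[fun_prop]
theorem continuous_hadamard (θ : Fin d → ℝ) : Continuous (hadamard θ) :=
  (PiLp.continuous_toLp 2 _).comp (continuous_pi fun i =>
    continuous_const.mul ((continuous_apply i).comp (PiLp.continuous_ofLp 2 _)))

theorem measurable_hadamard (θ : Fin d → ℝ) : Measurable (hadamard θ) :=
  (continuous_hadamard θ).measurable

theorem hadamard_hadamard (a b : Fin d → ℝ) (x : EuclideanSpace ℝ (Fin d)) :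
    hadamard a (hadamard b x) = hadamard (a * b) x := by
  ext i
  simp [hadamard_apply, mul_assoc]

theorem map_hadamard_map_hadamard (a b : Fin d → ℝ) :
    (μ.map (hadamard b)).map (hadamard a) = μ.map (hadamard (a * b)) := by
  rw [Measure.map_map (measurable_hadamard a) (measurable_hadamard b)]
  exact congrArg (Measure.map · μ) (funext (hadamard_hadamard a b))

noncomputable def hadamardEquiv (θ : Fin d → ℝ) (hθ : ∀ j, θ j ≠ 0) :
    EuclideanSpace ℝ (Fin d) ≃ᵐ EuclideanSpace ℝ (Fin d) where
  toFun := hadamard θ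
  invFun := hadamard θ⁻¹
  left_inv x := by ext i; simp [hadamard_apply, hθ]
  right_inv x := by ext i; simp [hadamard_apply, hθ]
  measurable_toFun := measurable_hadamard θ
  measurable_invFun := measurable_hadamard θ⁻¹

theorem preimage_hadamard_cell {r : Fin d → ℝ} (hr : ∀ j, 0 < r j) {ι : List Bool → Fin d}
    {c : List Bool → ℝ} (hdir : ∀ b, S.dir b = c b • EuclideanSpace.single (ι b) 1)
    (h : List Bool → ℝ) (b : List Bool) :
    hadamard r ⁻¹' cell S h b = cell S (fun b => h b / r (ι b)) b := by
  induction b with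
  | nil => rfl
  | cons j b ih =>
    have hH : hadamard r ⁻¹' {x | ⟪S.dir b, x⟫ ≤ h b} = {x | ⟪S.dir b, x⟫ ≤ h b / r (ι b)} := by
      ext x
      simp only [Set.mem_preimage, Set.mem_ofPred_eq, hdir, inner_smul_single_left, hadamard_apply,
        le_div_iff₀ (hr (ι b))]
      ring_nf
    cases j
    · rw [cell_cons_false, cell_cons_false, Set.preimage_inter, ih, hH]
    · rw [cell_cons_true, cell_cons_true, Set.preimage_sdiff, ih, hH]

theorem IsMedianHeights.of_map {D : EuclideanSpace ℝ (Fin d) → EuclideanSpace ℝ (Fin d)}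
    (hD : Measurable D) {h h' : List Bool → ℝ} (hpre : ∀ b, D ⁻¹' cell S h' b = cell S h b)
    (hm : IsMedianHeights S (μ.map D) h') : IsMedianHeights S μ h := fun b => by
  simpa only [Measure.map_apply hD (measurableSet_cell S h' _), hpre] using hm b

theorem ae_eq_hadamard_of_isNoCollisionMap [IsProbabilityMeasure μ]
    (haxis : ∀ b, ∃ (i : Fin d) (c : ℝ), S.dir b = c • EuclideanSpace.single i (1 : ℝ))
    (hrec : S.SplitsEachAxisInfinitelyOften)
    {r : Fin d → ℝ} (hr : ∀ j, 0 < r j) {hμ hν : List Bool → ℝ} (hm : IsMedianHeights S μ hμ)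
    (hm' : IsMedianHeights S (μ.map (hadamard r)) hν)
    {t : EuclideanSpace ℝ (Fin d) → EuclideanSpace ℝ (Fin d)}
    (ht : IsNoCollisionMap S hμ hν μ (μ.map (hadamard r)) t) : t =ᵐ[μ] hadamard r := by
  choose ι c hdir using haxis
  have hpre := preimage_hadamard_cell hr hdir hν
  refine ae_eq_of_isNoCollisionMap hrec hm (hadamardEquiv r fun j => (hr j).ne') rfl
    (fun b => ?_) ht
  change hadamard r ⁻¹' cell S hν b =ᵐ[μ] cell S hμ b
  rw [hpre]
  exact ((hm'.of_map (measurable_hadamard r) hpre).cell_ae_eq hm b)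

end Dilation

theorem integral_cost_le_of_potentials {α β : Type*} [MeasurableSpace α] [MeasurableSpace β]
    {μ : Measure α} {ν : Measure β} {c : α → β → ℝ} {F : α → ℝ} {G : β → ℝ}
    (hF : Integrable F μ) (hG : Integrable G ν) (hle : ∀ x y, F x + G y ≤ c x y) {T U : α → β}
    (hT : AEMeasurable T μ) (hTν : μ.map T = ν) (heq : ∀ x, c x (T x) = F x + G (T x))
    (hU : AEMeasurable U μ) (hUν : μ.map U = ν) (hcU : Integrable (fun x => c x (U x)) μ) :
    ∫ x, c x (T x) ∂μ ≤ ∫ x, c x (U x) ∂μ := by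
  have hGcomp : ∀ {V : α → β}, AEMeasurable V μ → μ.map V = ν →
      Integrable (fun x => G (V x)) μ ∧ ∫ x, G (V x) ∂μ = ∫ y, G y ∂ν := fun hV hVν => by
    rw [← hVν] at hG
    exact ⟨hG.comp_aemeasurable hV, by rw [← hVν, integral_map hV hG.aestronglyMeasurable]⟩
  obtain ⟨hGT, hGT'⟩ := hGcomp hT hTν
  obtain ⟨hGU, hGU'⟩ := hGcomp hU hUν
  calc ∫ x, c x (T x) ∂μ = ∫ x, F x ∂μ + ∫ y, G y ∂ν := by
        rw [integral_congr_ae (ae_of_all _ heq), integral_add hF hGT, hGT']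
    _ = ∫ x, F x + G (U x) ∂μ := by rw [integral_add hF hGU, hGU']
    _ ≤ ∫ x, c x (U x) ∂μ := integral_mono (hF.add hGU) hcU fun x => hle x (U x)

theorem sq_sub_eq_add_add_div {r : ℝ} (hr : r ≠ 0) (a b : ℝ) :
    (b - a) ^ 2 = (1 - r) * a ^ 2 + (1 - r⁻¹) * b ^ 2 + (b - r * a) ^ 2 / r := by
  field_simp
  ring

theorem norm_sub_sq_eq_sum (x y : EuclideanSpace ℝ (Fin d)) :
    ‖y - x‖ ^ 2 = ∑ j, (y j - x j) ^ 2 := by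
  simp [EuclideanSpace.norm_sq_eq]

theorem sum_add_sum_le_norm_sub_sq {r : Fin d → ℝ} (hr : ∀ j, 0 < r j)
    (x y : EuclideanSpace ℝ (Fin d)) :
    ∑ j, (1 - r j) * x j ^ 2 + ∑ j, (1 - (r j)⁻¹) * y j ^ 2 ≤ ‖y - x‖ ^ 2 := by
  rw [norm_sub_sq_eq_sum, ← Finset.sum_add_distrib]
  gcongr with j
  rw [sq_sub_eq_add_add_div (hr j).ne']
  have := div_nonneg (sq_nonneg (y j - r j * x j)) (hr j).le
  linarith

theorem norm_hadamard_sub_sq {r : Fin d → ℝ} (hr : ∀ j, r j ≠ 0) (x : EuclideanSpace ℝ (Fin d)) :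
    ‖hadamard r x - x‖ ^ 2 =
      ∑ j, (1 - r j) * x j ^ 2 + ∑ j, (1 - (r j)⁻¹) * hadamard r x j ^ 2 := by
  rw [norm_sub_sq_eq_sum, ← Finset.sum_add_distrib]
  refine Finset.sum_congr rfl fun j _ => ?_
  rw [sq_sub_eq_add_add_div (hr j), hadamard_apply]
  simp

theorem Continuous.memLp_of_ae_mem_compact {α F : Type*} [TopologicalSpace α]
    [MeasurableSpace α] [OpensMeasurableSpace α] [SecondCountableTopology α]
    [NormedAddCommGroup F] {μ : Measure α} [IsFiniteMeasure μ] {g : α → F} (hg : Continuous g)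
    {K : Set α} (hK : IsCompact K) (hμK : ∀ᵐ x ∂μ, x ∈ K) (p : ℝ≥0∞) : MemLp g p μ := by
  obtain ⟨C, hC⟩ := hK.exists_bound_of_continuousOn hg.continuousOn
  exact MemLp.of_bound hg.aestronglyMeasurable C (hμK.mono hC)

theorem ae_map_mem_image {α β : Type*} [TopologicalSpace α] [MeasurableSpace α]
    [TopologicalSpace β] [T2Space β] [MeasurableSpace β] [OpensMeasurableSpace β]
    {μ : Measure α} {f : α → β} (hf : Continuous f) (hfm : Measurable f) {K : Set α}
    (hK : IsCompact K) (hμK : ∀ᵐ x ∂μ, x ∈ K) : ∀ᵐ y ∂μ.map f, y ∈ f '' K :=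
  (ae_map_iff hfm.aemeasurable (hK.image hf).isClosed.measurableSet).2
    (hμK.mono fun _ hx => Set.mem_image_of_mem f hx)

theorem isOptimalMap_hadamard {μ : Measure (EuclideanSpace ℝ (Fin d))} [IsFiniteMeasure μ]
    {K : Set (EuclideanSpace ℝ (Fin d))} (hK : IsCompact K) (hμK : ∀ᵐ x ∂μ, x ∈ K)
    {r : Fin d → ℝ} (hr : ∀ j, 0 < r j) :
    IsOptimalMap μ (μ.map (hadamard r)) (hadamard r) := by
  refine ⟨measurable_hadamard r, rfl, fun U hU hUν => ?_⟩
  have hνK := ae_map_mem_image (continuous_hadamard r) (measurable_hadamard r) hK hμK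
  have hK' := hK.image (continuous_hadamard r)
  have hUsq : MemLp U (2 : ℕ) μ := by
    rw [← hUν] at hνK
    have := continuous_id.memLp_of_ae_mem_compact hK' hνK ((2 : ℕ) : ℝ≥0∞)
    rwa [memLp_map_measure_iff aestronglyMeasurable_id hU.aemeasurable] at this
  refine integral_cost_le_of_potentials (c := fun x y => ‖y - x‖ ^ 2)
    ((Continuous.memLp_of_ae_mem_compact (by fun_prop) hK hμK 1).integrable le_rfl)
    ((Continuous.memLp_of_ae_mem_compact (by fun_prop) hK' hνK 1).integrable le_rfl)
    (sum_add_sum_le_norm_sub_sq hr) (measurable_hadamard r).aemeasurable rfl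
    (norm_hadamard_sub_sq fun j => (hr j).ne') hU.aemeasurable hUν ?_
  exact (hUsq.sub (continuous_id.memLp_of_ae_mem_compact hK hμK _)).integrable_norm_pow two_ne_zero

theorem integral_norm_hadamard_sub_sq_map {μ₀ : Measure (EuclideanSpace ℝ (Fin d))}
    [IsFiniteMeasure μ₀] {K : Set (EuclideanSpace ℝ (Fin d))} (hK : IsCompact K)
    (hμ₀K : ∀ᵐ x ∂μ₀, x ∈ K) {θ : Fin d → ℝ} (hθ : ∀ j, θ j ≠ 0) (θ' : Fin d → ℝ) :
    ∫ x, ‖hadamard (fun j => θ' j / θ j) x - x‖ ^ 2 ∂(μ₀.map (hadamard θ)) =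
      ∑ j, (∫ x, x j ^ 2 ∂μ₀) * (θ j - θ' j) ^ 2 := by
  have hcoord : ∀ j, Integrable (fun x : EuclideanSpace ℝ (Fin d) => x j ^ 2) μ₀ := fun j =>
    (Continuous.memLp_of_ae_mem_compact (by fun_prop) hK hμ₀K 1).integrable le_rfl
  have hpt : ∀ x, ‖hadamard (fun j => θ' j / θ j) (hadamard θ x) - hadamard θ x‖ ^ 2 =
      ∑ j, (θ j - θ' j) ^ 2 * x j ^ 2 := fun x => by
    rw [norm_sub_sq_eq_sum]
    refine Finset.sum_congr rfl fun j _ => ?_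
    simp only [hadamard_apply]
    field_simp [hθ j]
    ring
  rw [integral_map (measurable_hadamard θ).aemeasurable (by fun_prop), integral_congr_ae
    (ae_of_all _ hpt), integral_finsetSum _ fun j _ => (hcoord j).const_mul _]
  simp_rw [integral_const_mul, mul_comm]

/-- For `μ₀ ∈ 𝒦`, `μ_θ = (θ ⊙ x)♯μ₀` with `θ ∈ ℝ₊ᵈ`, and an axis-aligned slicing schedule:
the no-collision map from `μ_θ` to `μ_{θ'}` is the coordinatewise dilation
`x_j ↦ (θ'_j/θ_j) x_j` a.e., it coincides with the optimal transport map, and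
`W_{𝒮,2}²(μ_θ, μ_{θ'}) = Σ_j c_j² (θ_j − θ'_j)²` with `c_j² = ∫ x_j² dμ₀`. -/
theorem no_collision_dilation
    (μ₀ : Measure (EuclideanSpace ℝ (Fin d))) (hK : MemK μ₀)
    (θ θ' : Fin d → ℝ) (hθ : ∀ j, 0 < θ j) (hθ' : ∀ j, 0 < θ' j)
    (S : Slicing d)
    (haxis : ∀ b, ∃ (i : Fin d) (c : ℝ), S.dir b = c • EuclideanSpace.single i (1 : ℝ))
    (hrec : ∀ (σ : ℕ → Bool) (i : Fin d),
      {k : ℕ | ∃ c : ℝ, S.dir (branch σ k) = c • EuclideanSpace.single i (1 : ℝ)}.Infinite)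
    (hdθ hdθ' : List Bool → ℝ)
    (hm : IsMedianHeights S (μ₀.map (hadamard θ)) hdθ)
    (hm' : IsMedianHeights S (μ₀.map (hadamard θ')) hdθ') :
    (∀ t, IsNoCollisionMap S hdθ hdθ' (μ₀.map (hadamard θ)) (μ₀.map (hadamard θ')) t →
      t =ᵐ[μ₀.map (hadamard θ)] hadamard (fun j => θ' j / θ j)) ∧
    IsOptimalMap (μ₀.map (hadamard θ)) (μ₀.map (hadamard θ'))
      (hadamard fun j => θ' j / θ j) ∧
    (∀ t, IsNoCollisionMap S hdθ hdθ' (μ₀.map (hadamard θ)) (μ₀.map (hadamard θ')) t →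
      ∫ x, ‖t x - x‖ ^ 2 ∂(μ₀.map (hadamard θ)) =
        ∑ j, (∫ x, (x j) ^ 2 ∂μ₀) * (θ j - θ' j) ^ 2) := by
  obtain ⟨hprob, -, K, hKc, hK0, -⟩ := hK
  have hμ₀K : ∀ᵐ x ∂μ₀, x ∈ K := ae_iff.2 hK0
  have := Measure.isProbabilityMeasure_map (μ := μ₀) (measurable_hadamard θ).aemeasurable
  have hr : ∀ j, 0 < θ' j / θ j := fun j => div_pos (hθ' j) (hθ j)
  have hν : (μ₀.map (hadamard θ)).map (hadamard fun j => θ' j / θ j) = μ₀.map (hadamard θ') := by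
    rw [map_hadamard_map_hadamard]
    congr with j
    exact div_mul_cancel₀ _ (hθ j).ne'
  have huniq : ∀ t, IsNoCollisionMap S hdθ hdθ' (μ₀.map (hadamard θ)) (μ₀.map (hadamard θ')) t →
      t =ᵐ[μ₀.map (hadamard θ)] hadamard (fun j => θ' j / θ j) := fun t ht =>
    ae_eq_hadamard_of_isNoCollisionMap haxis hrec hr hm (hν ▸ hm') (hν ▸ ht)
  refine ⟨huniq, hν ▸ isOptimalMap_hadamard (hKc.image (continuous_hadamard θ))
    (ae_map_mem_image (continuous_hadamard θ) (measurable_hadamard θ) hKc hμ₀K) hr,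
    fun t ht => ?_⟩
  rw [← integral_norm_hadamard_sub_sq_map hKc hμ₀K (fun j => (hθ j).ne') θ']
  refine integral_congr_ae ?_
  filter_upwards [huniq t ht] with x hx
  rw [hx]
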